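/- For any two bipartite quantum states ρ on ℂ^{d_A}⊗ℂ^{d_B} and σ on ℂ^{d_{A'}}⊗ℂ^{d_{B'}} with E_N(σ) > 0, the asymptotic exact conversion rate under PPTq operations is R_PPTq(ρ→σ) = E_N(ρ)/E_N(σ), where E_N is the logarithmic negativity. -/

import Mathlib

open scoped BigOperators ComplexOrder

noncomputable section

/-- Bipartite matrices on `ℂ^{IA} ⊗ ℂ^{IB}`, indexed by pairs. -/
abbrev BMat (IA IB : Type) : Type := Matrix (IA × IB) (IA × IB) ℂ

/-- Partial transpose on the `B` system: `(X^{T_B})_{(i,j),(k,l)} = X_{(i,l),(k,j)}`. -/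
def ptB {IA IB : Type} (X : BMat IA IB) : BMat IA IB :=
  fun p q => X (p.1, q.2) (q.1, p.2)

/-- Trace norm `‖X‖₁ = tr √(X† X)`. -/
noncomputable def traceNorm {n : Type} [Fintype n] [DecidableEq n]
    (X : Matrix n n ℂ) : ℝ :=
  (((Matrix.posSemidef_conjTranspose_mul_self X).1.eigenvectorUnitary.1 *
      Matrix.diagonal (fun i => ((Real.sqrt ((Matrix.posSemidef_conjTranspose_mul_self X).1.eigenvalues i) : ℝ) : ℂ)) *
      (star (Matrix.posSemidef_conjTranspose_mul_self X).1.eigenvectorUnitary : Matrix n n ℂ)).trace).re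

/-- Operator norm (largest singular value). -/
noncomputable def opNorm {n : Type} [Fintype n] [DecidableEq n] (X : Matrix n n ℂ) : ℝ :=
  ‖Matrix.toEuclideanCLM (𝕜 := ℂ) X‖

/-- Logarithmic negativity `E_N(X) = log₂ ‖X^{T_B}‖₁`. -/
noncomputable def EN {IA IB : Type} [Fintype IA] [Fintype IB] [DecidableEq IA] [DecidableEq IB]
    (X : BMat IA IB) : ℝ :=
  Real.logb 2 (traceNorm (ptB X))

/-- The extension `id_k ⊗ f` of a map on matrices, acting blockwise. -/
def extMap {I J : Type} (f : Matrix I I ℂ → Matrix J J ℂ) (k : ℕ)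
    (M : Matrix (Fin k × I) (Fin k × I) ℂ) : Matrix (Fin k × J) (Fin k × J) ℂ :=
  fun p q => f (fun i i' => M (p.1, i) (q.1, i')) p.2 q.2

/-- A map on matrices is completely positive if all its extensions `id_k ⊗ f`
map positive semidefinite matrices to positive semidefinite matrices. -/
def CompletelyPositive {I J : Type} [Fintype I] [Fintype J]
    (f : Matrix I I ℂ → Matrix J J ℂ) : Prop :=
  ∀ (k : ℕ) (M : Matrix (Fin k × I) (Fin k × I) ℂ), M.PosSemidef → (extMap f k M).PosSemidef

/-- A PPTq operation: a Hermitian-preserving, trace-preserving linear map `N`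
such that `T_{B'} ∘ N ∘ T_B` is completely positive. -/
def IsPPTq {IA IB JA JB : Type} [Fintype IA] [Fintype IB] [Fintype JA] [Fintype JB]
    (N : BMat IA IB →ₗ[ℂ] BMat JA JB) : Prop :=
  (∀ X : BMat IA IB, X.IsHermitian → (N X).IsHermitian) ∧
  (∀ X : BMat IA IB, (N X).trace = X.trace) ∧
  CompletelyPositive (fun X => ptB (N (ptB X)))

/-- A bipartite quasi-state: Hermitian with trace one. -/
def IsQuasiState {IA IB : Type} [Fintype IA] [Fintype IB] (ρ : BMat IA IB) : Prop :=
  ρ.IsHermitian ∧ ρ.trace = 1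

/-- A bipartite quantum state: positive semidefinite with trace one. -/
def IsState {IA IB : Type} [Fintype IA] [Fintype IB] (ρ : BMat IA IB) : Prop :=
  ρ.PosSemidef ∧ ρ.trace = 1

/-- The maximally entangled state `Φ^d = (1/d) ∑_{i,j} |ii⟩⟨jj|`. -/
noncomputable def MES (d : ℕ) : BMat (Fin d) (Fin d) :=
  fun p q => if p.1 = p.2 ∧ q.1 = q.2 then (1 : ℂ) / d else 0

/-- `n`-fold tensor (Kronecker) power, with all `A` factors grouped against all `B` factors. -/
def tensorPow {IA IB : Type} (ρ : BMat IA IB) (n : ℕ) :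
    BMat (Fin n → IA) (Fin n → IB) :=
  fun p q => ∏ i : Fin n, ρ (p.1 i, p.2 i) (q.1 i, q.2 i)

/-- Tensor (Kronecker) product of two bipartite matrices, grouping `A` systems together
and `B` systems together. -/
def tensorMul {IA IB JA JB : Type} (ρ : BMat IA IB) (σ : BMat JA JB) :
    BMat (IA × JA) (IB × JB) :=
  fun p q => ρ (p.1.1, p.2.1) (q.1.1, q.2.1) * σ (p.1.2, p.2.2) (q.1.2, q.2.2)

/-- One-shot exact distillable entanglement under PPTq operations. -/
noncomputable def oneShotDistill {IA IB : Type} [Fintype IA] [Fintype IB]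
    (ρ : BMat IA IB) : ℝ :=
  sSup { x : ℝ | ∃ d : ℕ, 0 < d ∧ x = Real.logb 2 d ∧
    ∃ Λ : BMat IA IB →ₗ[ℂ] BMat (Fin d) (Fin d), IsPPTq Λ ∧ Λ ρ = MES d }

/-- One-shot exact entanglement cost under PPTq operations. -/
noncomputable def oneShotCost {IA IB : Type} [Fintype IA] [Fintype IB]
    (ρ : BMat IA IB) : ℝ :=
  sInf { x : ℝ | ∃ d : ℕ, 0 < d ∧ x = Real.logb 2 d ∧
    ∃ Λ : BMat (Fin d) (Fin d) →ₗ[ℂ] BMat IA IB, IsPPTq Λ ∧ Λ (MES d) = ρ }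

/-- The one-shot distillation error for `n` copies towards `Φ^d`, optimized over PPTq operations. -/
noncomputable def distillErr {IA IB : Type} [Fintype IA] [Fintype IB]
    [DecidableEq IA] [DecidableEq IB] (ρ : BMat IA IB) (n d : ℕ) : ℝ :=
  sInf { e : ℝ | ∃ Λ : BMat (Fin n → IA) (Fin n → IB) →ₗ[ℂ] BMat (Fin d) (Fin d),
    IsPPTq Λ ∧ e = traceNorm (Λ (tensorPow ρ n) - MES d) }

/-- The one-shot dilution error for preparing `n` copies from `Φ^d`, optimized over PPTq operations. -/
noncomputable def costErr {IA IB : Type} [Fintype IA] [Fintype IB]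
    [DecidableEq IA] [DecidableEq IB] (ρ : BMat IA IB) (n d : ℕ) : ℝ :=
  sInf { e : ℝ | ∃ Λ : BMat (Fin d) (Fin d) →ₗ[ℂ] BMat (Fin n → IA) (Fin n → IB),
    IsPPTq Λ ∧ e = traceNorm (tensorPow ρ n - Λ (MES d)) }

/-- Distillable entanglement under PPTq operations (asymptotically vanishing error). -/
noncomputable def EDppt {IA IB : Type} [Fintype IA] [Fintype IB]
    [DecidableEq IA] [DecidableEq IB] (ρ : BMat IA IB) : ℝ :=
  sSup { r : ℝ | Filter.Tendsto (fun n : ℕ => distillErr ρ n (2 ^ ⌊r * n⌋₊))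
    Filter.atTop (nhds 0) }

/-- Entanglement cost under PPTq operations (asymptotically vanishing error). -/
noncomputable def ECppt {IA IB : Type} [Fintype IA] [Fintype IB]
    [DecidableEq IA] [DecidableEq IB] (ρ : BMat IA IB) : ℝ :=
  sInf { r : ℝ | Filter.Tendsto (fun n : ℕ => costErr ρ n (2 ^ ⌈r * n⌉₊))
    Filter.atTop (nhds 0) }

/-- Tempered negativity `N_τ(σ | ρ)`. -/
noncomputable def temperedNeg {IA IB : Type} [Fintype IA] [Fintype IB]
    [DecidableEq IA] [DecidableEq IB] (σ ρ : BMat IA IB) : ℝ :=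
  sSup { t : ℝ | ∃ X : Matrix (IA × IB) (IA × IB) ℂ, X.IsHermitian ∧
    opNorm (ptB X) ≤ 1 ∧ (X * ρ).trace = (opNorm X : ℂ) ∧ (X * σ).trace = (t : ℂ) }

/-- Asymptotic exact conversion rate under PPTq operations. -/
noncomputable def convRate {IA IB JA JB : Type} [Fintype IA] [Fintype IB]
    [Fintype JA] [Fintype JB]
    (ρ : BMat IA IB) (σ : BMat JA JB) : ℝ :=
  sSup { r : ℝ | 0 ≤ r ∧ ∀ᶠ n : ℕ in Filter.atTop,
    ∃ Λ : BMat (Fin n → IA) (Fin n → IB) →ₗ[ℂ]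
          BMat (Fin ⌊r * n⌋₊ → JA) (Fin ⌊r * n⌋₊ → JB),
      IsPPTq Λ ∧ Λ (tensorPow ρ n) = tensorPow σ ⌊r * n⌋₊ }

/-! Both directions rest on the one-shot criterion: a quasi-state `ρ` converts exactly into `σ`
under a PPTq operation iff `‖σ^Γ‖₁ ≤ ‖ρ^Γ‖₁`. Necessity: write `ρ^Γ = P - Q` with `P, Q ≥ 0` and
`tr P + tr Q = ‖ρ^Γ‖₁`; the map `Y ↦ Λ(Y^Γ)^Γ` is positive and trace preserving, so
`‖Λ(ρ)^Γ‖₁ ≤ tr P + tr Q`. Sufficiency: measure `ρ^Γ` in its eigenbasis and prepare a state `C`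
on nonnegative eigenvalues and `D` on negative ones. If `a` is the negative eigenvalue mass of
`ρ^Γ`, then `‖ρ^Γ‖₁ = 1 + 2a`, and `‖σ^Γ‖₁ ≤ 1 + 2a` is exactly what allows states `C, D` with
`(1 + a) C - a D = σ^Γ`; conjugating this measure-and-prepare channel by the partial transpose
gives the PPTq operation. Since
`‖(ρ^{⊗n})^Γ‖₁ = ‖ρ^Γ‖₁ⁿ`, `n` copies of `ρ` convert into `m` copies of `σ` iff
`m E_N(σ) ≤ n E_N(ρ)`, and the rate is `E_N(ρ) / E_N(σ)`. -/

open Matrix Filter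
open scoped MatrixOrder Kronecker

namespace Matrix
variable {n : Type} [Fintype n] [DecidableEq n]

lemma trace_star_mul_mul_of_mem_unitaryGroup {U : Matrix n n ℂ} (hU : U ∈ unitaryGroup n ℂ)
    (X : Matrix n n ℂ) : (star U * X * U).trace = X.trace := by
  rw [trace_mul_cycle, mem_unitaryGroup_iff.mp hU, one_mul]

lemma IsHermitian.star_eigenvectorUnitary_mul_mul {A : Matrix n n ℂ} (hA : A.IsHermitian) :
    star (hA.eigenvectorUnitary : Matrix n n ℂ) * A * (hA.eigenvectorUnitary : Matrix n n ℂ) =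
      diagonal (RCLike.ofReal ∘ hA.eigenvalues) := by
  simpa [Unitary.conjStarAlgAut_star_apply] using hA.conjStarAlgAut_star_eigenvectorUnitary

lemma IsHermitian.re_trace_eq_sum_eigenvalues {H : Matrix n n ℂ} (hH : H.IsHermitian) :
    H.trace.re = ∑ i, hH.eigenvalues i := by
  simp [hH.trace_eq_sum_eigenvalues]

lemma IsHermitian.trace_cfc {A : Matrix n n ℂ} (hA : A.IsHermitian) (f : ℝ → ℝ) :
    (cfc f A).trace = ∑ i, (f (hA.eigenvalues i) : ℂ) := by
  rw [hA.cfc_eq, IsHermitian.cfc, Unitary.conjStarAlgAut_apply, trace_mul_cycle,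
    Unitary.coe_star_mul_self, one_mul, trace_diagonal]
  rfl

end Matrix

section traceNorm
variable {n : Type} [Fintype n] [DecidableEq n]

lemma traceNorm_eq_re_trace_abs (X : Matrix n n ℂ) : traceNorm X = (CFC.abs X).trace.re := by
  have hXX := posSemidef_conjTranspose_mul_self X
  rw [CFC.abs, star_eq_conjTranspose, CFC.sqrt_eq_real_sqrt _ hXX.nonneg, cfcₙ_eq_cfc,
    hXX.1.cfc_eq]
  rfl

lemma traceNorm_eq_sum_abs_eigenvalues {H : Matrix n n ℂ} (hH : H.IsHermitian) :
    traceNorm H = ∑ i, |hH.eigenvalues i| := by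
  rw [traceNorm_eq_re_trace_abs, CFC.abs_eq_cfc_norm H hH.isSelfAdjoint, hH.trace_cfc]
  simp [Real.norm_eq_abs]

lemma Matrix.IsHermitian.traceNorm_eq_re_trace_posPart_add_negPart {H : Matrix n n ℂ}
    (hH : H.IsHermitian) :
    traceNorm H = (H⁺.trace + H⁻.trace).re := by
  rw [traceNorm_eq_re_trace_abs, ← CFC.posPart_add_negPart H hH.isSelfAdjoint, trace_add]

lemma traceNorm_sub_le_re_trace_add {P Q : Matrix n n ℂ} (hP : P.PosSemidef)
    (hQ : Q.PosSemidef) :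
    traceNorm (P - Q) ≤ (P.trace + Q.trace).re := by
  have hH : (P - Q).IsHermitian := hP.1.sub hQ.1
  set U : Matrix n n ℂ := (hH.eigenvectorUnitary : Matrix n n ℂ)
  have hU : U ∈ unitaryGroup n ℂ := hH.eigenvectorUnitary.2
  have hP' := hP.conjTranspose_mul_mul_same U
  have hQ' := hQ.conjTranspose_mul_mul_same U
  rw [← star_eq_conjTranspose] at hP' hQ'
  have heig (i : n) :
      hH.eigenvalues i = ((star U * P * U) i i).re - ((star U * Q * U) i i).re := by
    have := congrArg (fun M => (M i i).re) hH.star_eigenvectorUnitary_mul_mul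
    simpa [U, mul_sub, sub_mul] using this.symm
  calc traceNorm (P - Q) = ∑ i, |hH.eigenvalues i| := traceNorm_eq_sum_abs_eigenvalues hH
    _ ≤ ∑ i, (((star U * P * U) i i).re + ((star U * Q * U) i i).re) := by
      refine Finset.sum_le_sum fun i _ => ?_
      rw [heig, abs_sub_le_iff]
      have := (Complex.nonneg_iff.mp (hP'.diag_nonneg (i := i))).1
      have := (Complex.nonneg_iff.mp (hQ'.diag_nonneg (i := i))).1
      constructor <;> linarith
    _ = (P.trace + Q.trace).re := by
      rw [Finset.sum_add_distrib, ← trace_star_mul_mul_of_mem_unitaryGroup hU P,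
        ← trace_star_mul_mul_of_mem_unitaryGroup hU Q]
      simp [trace]

end traceNorm

section partialTranspose
variable {IA IB : Type}

lemma Matrix.IsHermitian.ptB {X : BMat IA IB} (hX : X.IsHermitian) : (ptB X).IsHermitian :=
  congrArg _root_.ptB hX.eq

lemma trace_ptB [Fintype IA] [Fintype IB] (X : BMat IA IB) : (ptB X).trace = X.trace := rfl

lemma ptB_tensorPow (X : BMat IA IB) (n : ℕ) : ptB (tensorPow X n) = tensorPow (ptB X) n := rfl

def ptBLinear : BMat IA IB →ₗ[ℂ] BMat IA IB where
  toFun := ptB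
  map_add' _ _ := rfl
  map_smul' _ _ := rfl

@[simp]
lemma ptBLinear_apply (X : BMat IA IB) : ptBLinear X = ptB X := rfl

end partialTranspose

section quasiState
variable {IA IB : Type} [Fintype IA] [Fintype IB] [DecidableEq IA] [DecidableEq IB]

lemma one_le_traceNorm_ptB {ρ : BMat IA IB} (hρ : IsQuasiState ρ) : 1 ≤ traceNorm (ptB ρ) := by
  have hA := hρ.1.ptB
  have htr := hA.re_trace_eq_sum_eigenvalues
  rw [trace_ptB, hρ.2, Complex.one_re] at htr
  rw [traceNorm_eq_sum_abs_eigenvalues hA]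
  exact htr.trans_le ((le_abs_self _).trans (Finset.abs_sum_le_sum_abs _ _))

lemma EN_nonneg {ρ : BMat IA IB} (hρ : IsQuasiState ρ) : 0 ≤ EN ρ :=
  Real.logb_nonneg one_lt_two (one_le_traceNorm_ptB hρ)

end quasiState

section tensorPow
variable {IA IB : Type}

lemma tensorPow_conjTranspose (X : BMat IA IB) (n : ℕ) : (tensorPow X n)ᴴ = tensorPow Xᴴ n := by
  ext p q
  simp [tensorPow, conjTranspose_apply]

lemma Matrix.IsHermitian.tensorPow {X : BMat IA IB} (hX : X.IsHermitian) (n : ℕ) :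
    (tensorPow X n).IsHermitian := by
  rw [IsHermitian, tensorPow_conjTranspose, hX.eq]

variable [Fintype IA] [Fintype IB]

lemma tensorPow_mul (X Y : BMat IA IB) (n : ℕ) :
    tensorPow X n * tensorPow Y n = tensorPow (X * Y) n := by
  ext p q
  simp only [tensorPow, mul_apply, Fintype.prod_sum]
  rw [← (Equiv.arrowProdEquivProdArrow (Fin n) (fun _ => IA) (fun _ => IB)).sum_comp]
  exact Finset.sum_congr rfl fun _ _ => Finset.prod_mul_distrib.symm

lemma trace_tensorPow (X : BMat IA IB) (n : ℕ) : (tensorPow X n).trace = X.trace ^ n := by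
  rw [trace, trace, Finset.sum_pow',
    ← (Equiv.arrowProdEquivProdArrow (Fin n) (fun _ => IA) (fun _ => IB)).sum_comp]
  rfl

lemma IsQuasiState.tensorPow {ρ : BMat IA IB} (hρ : IsQuasiState ρ) (n : ℕ) :
    IsQuasiState (tensorPow ρ n) :=
  ⟨hρ.1.tensorPow n, by rw [trace_tensorPow, hρ.2, one_pow]⟩

variable [DecidableEq IA] [DecidableEq IB]

lemma Matrix.PosSemidef.tensorPow {X : BMat IA IB} (hX : X.PosSemidef) (n : ℕ) :
    (tensorPow X n).PosSemidef := by
  obtain ⟨R, rfl⟩ := CStarAlgebra.nonneg_iff_eq_star_mul_self.mp hX.nonneg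
  rw [← tensorPow_mul, star_eq_conjTranspose, ← tensorPow_conjTranspose]
  exact posSemidef_conjTranspose_mul_self _

lemma abs_tensorPow (X : BMat IA IB) (n : ℕ) :
    CFC.abs (tensorPow X n) = tensorPow (CFC.abs X) n := by
  rw [CFC.abs, star_eq_conjTranspose, tensorPow_conjTranspose, tensorPow_mul]
  refine CFC.sqrt_unique ?_ ((CFC.abs_nonneg X).posSemidef.tensorPow n).nonneg
  rw [tensorPow_mul, CFC.abs_mul_abs, star_eq_conjTranspose]

lemma traceNorm_tensorPow (X : BMat IA IB) (n : ℕ) :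
    traceNorm (tensorPow X n) = traceNorm X ^ n := by
  obtain ⟨t, -, ht⟩ :=
    RCLike.nonneg_iff_exists_ofReal.mp (CFC.abs_nonneg X).posSemidef.trace_nonneg
  rw [traceNorm_eq_re_trace_abs, traceNorm_eq_re_trace_abs, abs_tensorPow, trace_tensorPow, ← ht]
  norm_cast

lemma EN_tensorPow (X : BMat IA IB) (n : ℕ) : EN (tensorPow X n) = n * EN X := by
  rw [EN, EN, ptB_tensorPow, traceNorm_tensorPow, Real.logb_pow]

end tensorPow

section measurePrepare
variable {m n : Type} [Fintype m]

def measurePrepare (U : Matrix m m ℂ) (C : m → Matrix n n ℂ) :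
    Matrix m m ℂ →ₗ[ℂ] Matrix n n ℂ where
  toFun X := ∑ i, (star U * X * U) i i • C i
  map_add' X Y := by
    simp only [Matrix.mul_add, Matrix.add_mul, Matrix.add_apply, add_smul, Finset.sum_add_distrib]
  map_smul' c X := by
    simp only [Matrix.mul_smul, Matrix.smul_mul, Matrix.smul_apply, smul_eq_mul, RingHom.id_apply,
      Finset.smul_sum, smul_smul]

lemma measurePrepare_apply (U : Matrix m m ℂ) (C : m → Matrix n n ℂ) (X : Matrix m m ℂ) :
    measurePrepare U C X = ∑ i, (star U * X * U) i i • C i := rfl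

lemma trace_measurePrepare [Fintype n] [DecidableEq m] {U : Matrix m m ℂ}
    (hU : U ∈ unitaryGroup m ℂ) {C : m → Matrix n n ℂ} (hC : ∀ i, (C i).trace = 1)
    (X : Matrix m m ℂ) :
    (measurePrepare U C X).trace = X.trace := by
  simp only [measurePrepare_apply, trace_sum, trace_smul, hC, smul_eq_mul, mul_one]
  exact trace_star_mul_mul_of_mem_unitaryGroup hU X

lemma isHermitian_measurePrepare (U : Matrix m m ℂ) {C : m → Matrix n n ℂ}
    (hC : ∀ i, (C i).IsHermitian) {X : Matrix m m ℂ} (hX : X.IsHermitian) :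
    (measurePrepare U C X).IsHermitian := by
  have hUXU : (star U * X * U).IsHermitian := by
    simpa [star_eq_conjTranspose] using isHermitian_conjTranspose_mul_mul U hX
  refine isSelfAdjoint_sum _ fun i _ => ?_
  exact IsSelfAdjoint.smul (hUXU.apply i i) (hC i)

lemma measurePrepare_eigenvectorUnitary_self [DecidableEq m] {A : Matrix m m ℂ}
    (hA : A.IsHermitian) (C : m → Matrix n n ℂ) :
    measurePrepare (hA.eigenvectorUnitary : Matrix m m ℂ) C A =
      ∑ i, (hA.eigenvalues i : ℂ) • C i := by
  simp [measurePrepare_apply, hA.star_eigenvectorUnitary_mul_mul]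

lemma completelyPositive_measurePrepare [Fintype n] (U : Matrix m m ℂ) {C : m → Matrix n n ℂ}
    (hC : ∀ i, (C i).PosSemidef) : CompletelyPositive (measurePrepare U C) := by
  intro k M hM
  let V (i : m) : Matrix (Fin k × m) (Fin k) ℂ := of fun r b => if r.1 = b then U r.2 i else 0
  have hext : extMap (measurePrepare U C) k M = ∑ i, ((V i)ᴴ * M * V i) ⊗ₖ C i := by
    ext p q
    have hblock (i : m) : (star U * (of fun x y => M (p.1, x) (q.1, y)) * U) i i =
        ((V i)ᴴ * M * V i) p.1 q.1 := by
      simp [V, mul_apply, Fintype.sum_prod_type, apply_ite (starRingEnd ℂ), ite_mul, Finset.sum_mul]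
    show (∑ i, (star U * (of fun x y => M (p.1, x) (q.1, y)) * U) i i • C i) p.2 q.2 = _
    simp only [Matrix.sum_apply, Matrix.smul_apply, kroneckerMap_apply, hblock, smul_eq_mul]
  rw [hext]
  exact posSemidef_sum _ fun i _ => (hM.conjTranspose_mul_mul_same (V i)).kronecker (hC i)

end measurePrepare

lemma sum_ofReal_smul_ite_nonneg {ι M : Type*} [Fintype ι] [AddCommGroup M] [Module ℂ M]
    (x : ι → ℝ) (c d : M) :
    ∑ i, (x i : ℂ) • (if 0 ≤ x i then c else d) =
      ((∑ i, (x i)⁺ : ℝ) : ℂ) • c - ((∑ i, (x i)⁻ : ℝ) : ℂ) • d := by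
  push_cast
  rw [Finset.sum_smul, Finset.sum_smul, ← Finset.sum_sub_distrib]
  refine Finset.sum_congr rfl fun i _ => ?_
  split_ifs with h
  · simp [posPart_eq_self.mpr h, negPart_eq_zero.mpr h]
  · simp [posPart_eq_zero.mpr (le_of_not_ge h), negPart_eq_neg.mpr (le_of_not_ge h)]

lemma exists_posSemidef_smul_sub_smul_eq {n : Type} [Fintype n] [DecidableEq n]
    {P Q : Matrix n n ℂ} (hP : P.PosSemidef) (hQ : Q.PosSemidef) (htr : P.trace - Q.trace = 1)
    {b : ℝ} (hb : Q.trace.re ≤ b) :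
    ∃ C D : Matrix n n ℂ, C.PosSemidef ∧ D.PosSemidef ∧ C.trace = 1 ∧ D.trace = 1 ∧
      ((1 + b : ℝ) : ℂ) • C - (b : ℂ) • D = P - Q := by
  obtain ⟨q, hq0, hq⟩ : ∃ q : ℝ, 0 ≤ q ∧ (q : ℂ) = Q.trace :=
    RCLike.nonneg_iff_exists_ofReal.mp hQ.trace_nonneg
  have hp : P.trace = ((1 + q : ℝ) : ℂ) := by push_cast; rw [hq]; linear_combination htr
  rw [← hq, Complex.ofReal_re] at hb
  have hq1 : 0 < 1 + q := by linarith
  -- `C = P / tr P`; `D` takes `Q` together with the surplus `b - tr Q`, spread along `P`.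
  set C : Matrix n n ℂ := (((1 + q)⁻¹ : ℝ) : ℂ) • P
  have hC : C.PosSemidef := hP.smul (Complex.zero_le_real.mpr (by positivity))
  have htrC : C.trace = 1 := by
    rw [trace_smul, hp, smul_eq_mul, ← Complex.ofReal_mul, inv_mul_cancel₀ hq1.ne',
      Complex.ofReal_one]
  rcases eq_or_lt_of_le (hq0.trans hb) with hb0 | hb0
  · subst hb0
    have hQ0 : Q = 0 :=
      hQ.trace_eq_zero_iff.mp (by rw [← hq, le_antisymm hb hq0, Complex.ofReal_zero])
    refine ⟨C, C, hC, hC, htrC, htrC, ?_⟩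
    simp [C, hQ0, le_antisymm hb hq0]
  · set D : Matrix n n ℂ := ((b⁻¹ : ℝ) : ℂ) • (Q + (((b - q) / (1 + q) : ℝ) : ℂ) • P)
    have hD : D.PosSemidef := by
      refine (hQ.add (hP.smul ?_)).smul (Complex.zero_le_real.mpr (by positivity))
      exact Complex.zero_le_real.mpr (div_nonneg (by linarith) hq1.le)
    have htrD : D.trace = 1 := by
      have : b⁻¹ * (q + (b - q) / (1 + q) * (1 + q)) = 1 := by field_simp; ring
      rw [trace_smul, trace_add, trace_smul, hp, ← hq, smul_eq_mul, smul_eq_mul]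
      exact_mod_cast this
    refine ⟨C, D, hC, hD, htrC, htrD, ?_⟩
    have h1 : (1 + b) * (1 + q)⁻¹ - b * (b⁻¹ * ((b - q) / (1 + q))) = 1 := by field_simp; ring
    have h2 : b * b⁻¹ = 1 := mul_inv_cancel₀ hb0.ne'
    simp only [C, D, smul_smul, smul_add]
    match_scalars
    · simpa using congrArg Complex.ofReal h1
    · simpa using congrArg Complex.ofReal h2

lemma CompletelyPositive.posSemidef {I J : Type} [Fintype I] [Fintype J]
    {f : Matrix I I ℂ → Matrix J J ℂ} (hf : CompletelyPositive f) {X : Matrix I I ℂ}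
    (hX : X.PosSemidef) : (f X).PosSemidef :=
  (hf 1 (X.submatrix Prod.snd Prod.snd) (hX.submatrix _)).submatrix fun j => ((0 : Fin 1), j)

section PPTq
variable {IA IB JA JB : Type} [Fintype IA] [Fintype IB] [Fintype JA] [Fintype JB]

lemma isPPTq_ptB_comp_ptB {Φ : BMat IA IB →ₗ[ℂ] BMat JA JB}
    (hH : ∀ X, X.IsHermitian → (Φ X).IsHermitian) (htr : ∀ X, (Φ X).trace = X.trace)
    (hΦ : CompletelyPositive Φ) : IsPPTq (ptBLinear ∘ₗ Φ ∘ₗ ptBLinear) :=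
  ⟨fun _ hX => (hH _ hX.ptB).ptB, fun X => (htr (ptB X)).trans (trace_ptB X), hΦ⟩

variable [DecidableEq IA] [DecidableEq IB]

theorem exists_isPPTq_ptB_map_eq {ρ : BMat IA IB} (hA : (ptB ρ).IsHermitian)
    {C D : BMat JA JB} (hC : C.PosSemidef) (hD : D.PosSemidef) (htrC : C.trace = 1)
    (htrD : D.trace = 1) :
    ∃ Λ : BMat IA IB →ₗ[ℂ] BMat JA JB, IsPPTq Λ ∧ ptB (Λ ρ) =
      ((∑ i, (hA.eigenvalues i)⁺ : ℝ) : ℂ) • C - ((∑ i, (hA.eigenvalues i)⁻ : ℝ) : ℂ) • D := by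
  set U : BMat IA IB := (hA.eigenvectorUnitary : BMat IA IB)
  set Cs : IA × IB → BMat JA JB := fun i => if 0 ≤ hA.eigenvalues i then C else D
  have hCs (i : IA × IB) : (Cs i).PosSemidef ∧ (Cs i).trace = 1 := by
    simp only [Cs]
    split_ifs
    exacts [⟨hC, htrC⟩, ⟨hD, htrD⟩]
  refine ⟨ptBLinear ∘ₗ measurePrepare U Cs ∘ₗ ptBLinear, isPPTq_ptB_comp_ptB ?_ ?_ ?_, ?_⟩
  · exact fun _ => isHermitian_measurePrepare U fun i => (hCs i).1.1
  · exact trace_measurePrepare hA.eigenvectorUnitary.2 fun i => (hCs i).2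
  · exact completelyPositive_measurePrepare U fun i => (hCs i).1
  · rw [← sum_ofReal_smul_ite_nonneg, ← measurePrepare_eigenvectorUnitary_self]
    rfl

variable [DecidableEq JA] [DecidableEq JB]

theorem traceNorm_ptB_map_le {Λ : BMat IA IB →ₗ[ℂ] BMat JA JB} (hΛ : IsPPTq Λ)
    {X : BMat IA IB} (hX : X.IsHermitian) : traceNorm (ptB (Λ X)) ≤ traceNorm (ptB X) := by
  set A := ptB X
  set g : BMat IA IB → BMat JA JB := fun Y => ptB (Λ (ptB Y))
  have hg (Y : BMat IA IB) : (g Y).trace = Y.trace := hΛ.2.1 (ptB Y)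
  have hΛX : ptB (Λ X) = g A⁺ - g A⁻ := by
    have hX' : X = ptB (A⁺ - A⁻) :=
      congrArg ptB (CFC.posPart_sub_negPart A hX.ptB.isSelfAdjoint).symm
    conv_lhs => rw [hX']
    exact congrArg ptB (map_sub Λ (ptB A⁺) (ptB A⁻))
  calc traceNorm (ptB (Λ X)) ≤ ((g A⁺).trace + (g A⁻).trace).re := by
        rw [hΛX]
        exact traceNorm_sub_le_re_trace_add
          (hΛ.2.2.posSemidef (CFC.posPart_nonneg A).posSemidef)
          (hΛ.2.2.posSemidef (CFC.negPart_nonneg A).posSemidef)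
    _ = traceNorm A := by rw [hg, hg, hX.ptB.traceNorm_eq_re_trace_posPart_add_negPart]

theorem exists_isPPTq_map_eq_of_traceNorm_ptB_le {ρ : BMat IA IB} {σ : BMat JA JB}
    (hρ : IsQuasiState ρ) (hσ : IsQuasiState σ) (hle : traceNorm (ptB σ) ≤ traceNorm (ptB ρ)) :
    ∃ Λ : BMat IA IB →ₗ[ℂ] BMat JA JB, IsPPTq Λ ∧ Λ ρ = σ := by
  set A := ptB ρ
  set B := ptB σ
  have hA : A.IsHermitian := hρ.1.ptB
  have hB : B.IsHermitian := hσ.1.ptB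
  set a := ∑ i, (hA.eigenvalues i)⁻
  have hsum : ∑ i, (hA.eigenvalues i)⁺ = 1 + a := by
    have htr := hA.re_trace_eq_sum_eigenvalues
    rw [trace_ptB, hρ.2, Complex.one_re] at htr
    have hdiff : ∑ i, (hA.eigenvalues i)⁺ - a = ∑ i, hA.eigenvalues i := by
      simp only [a, ← Finset.sum_sub_distrib, posPart_sub_negPart]
    linarith
  have hnormA : traceNorm A = 1 + 2 * a := by
    simp only [traceNorm_eq_sum_abs_eigenvalues hA, ← posPart_add_negPart, Finset.sum_add_distrib]
    rw [hsum]
    ring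
  have htrB : B⁺.trace - B⁻.trace = 1 := by
    rw [← trace_sub, CFC.posPart_sub_negPart B hB.isSelfAdjoint, trace_ptB, hσ.2]
  have hnegB : B⁻.trace.re ≤ a := by
    have hnormB := hB.traceNorm_eq_re_trace_posPart_add_negPart
    have htrB' := congrArg Complex.re htrB
    rw [Complex.add_re] at hnormB
    rw [Complex.sub_re, Complex.one_re] at htrB'
    linarith
  obtain ⟨C, D, hC, hD, htrC, htrD, hCD⟩ := exists_posSemidef_smul_sub_smul_eq
    (CFC.posPart_nonneg B).posSemidef (CFC.negPart_nonneg B).posSemidef htrB hnegB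
  obtain ⟨Λ, hΛ, hΛρ⟩ := exists_isPPTq_ptB_map_eq hA hC hD htrC htrD
  refine ⟨Λ, hΛ, ?_⟩
  rw [hsum, hCD, CFC.posPart_sub_negPart B hB.isSelfAdjoint] at hΛρ
  exact congrArg ptB hΛρ

theorem exists_isPPTq_map_eq_iff_EN_le {ρ : BMat IA IB} {σ : BMat JA JB}
    (hρ : IsQuasiState ρ) (hσ : IsQuasiState σ) :
    (∃ Λ : BMat IA IB →ₗ[ℂ] BMat JA JB, IsPPTq Λ ∧ Λ ρ = σ) ↔ EN σ ≤ EN ρ := by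
  rw [EN, EN, Real.logb_le_logb one_lt_two (one_pos.trans_le (one_le_traceNorm_ptB hσ))
    (one_pos.trans_le (one_le_traceNorm_ptB hρ))]
  refine ⟨fun ⟨Λ, hΛ, hΛρ⟩ => hΛρ ▸ traceNorm_ptB_map_le hΛ hρ.1,
    exists_isPPTq_map_eq_of_traceNorm_ptB_le hρ hσ⟩

end PPTq

lemma sSup_setOf_eventually_floor_mul_le {a b : ℝ} (ha : 0 ≤ a) (hb : 0 < b) :
    sSup {r : ℝ | 0 ≤ r ∧ ∀ᶠ n : ℕ in atTop, (⌊r * n⌋₊ : ℝ) * b ≤ n * a} = a / b := by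
  refine IsGreatest.csSup_eq ⟨⟨by positivity, Eventually.of_forall fun n => ?_⟩, ?_⟩
  · calc (⌊a / b * n⌋₊ : ℝ) * b ≤ a / b * n * b :=
          mul_le_mul_of_nonneg_right (Nat.floor_le (by positivity)) hb.le
      _ = n * a := by field_simp
  · rintro r ⟨-, hr⟩
    by_contra! hlt
    have hδ : 0 < r * b - a := by rw [div_lt_iff₀ hb] at hlt; linarith
    have hlarge : ∀ᶠ n : ℕ in atTop, b < n * (r * b - a) :=
      (tendsto_natCast_atTop_atTop.atTop_mul_const hδ).eventually_gt_atTop b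
    obtain ⟨n, hn, hbig⟩ := (hr.and hlarge).exists
    have := Nat.lt_floor_add_one (r * n)
    nlinarith

/-- The asymptotic exact conversion rate under PPTq operations is
the ratio of logarithmic negativities. -/
theorem convRate_eq_EN_div {dA dB dA' dB' : ℕ}
    (ρ : BMat (Fin dA) (Fin dB)) (σ : BMat (Fin dA') (Fin dB'))
    (hρ : IsState ρ) (hσ : IsState σ) (hσEN : 0 < EN σ) :
    convRate ρ σ = EN ρ / EN σ := by
  have hρ' : IsQuasiState ρ := ⟨hρ.1.1, hρ.2⟩
  have hσ' : IsQuasiState σ := ⟨hσ.1.1, hσ.2⟩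
  have hconv (n m : ℕ) : (∃ Λ : BMat (Fin n → Fin dA) (Fin n → Fin dB) →ₗ[ℂ]
      BMat (Fin m → Fin dA') (Fin m → Fin dB'), IsPPTq Λ ∧ Λ (tensorPow ρ n) = tensorPow σ m) ↔
      (m : ℝ) * EN σ ≤ n * EN ρ := by
    rw [exists_isPPTq_map_eq_iff_EN_le (hρ'.tensorPow n) (hσ'.tensorPow m), EN_tensorPow,
      EN_tensorPow]
  simp only [convRate, hconv]
  exact sSup_setOf_eventually_floor_mul_le (EN_nonneg hρ') hσEN
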